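/- arXiv:1410.1845 — 2 statements merged into one kernel-verified Lean document; each statement's English description precedes it below -/
import Mathlib

section
/- Let (x_α)_{α∈Λ^{<b}} be a family in a normed space with 0 ≤ ‖x_α‖ < 1 for all α. Then (x_α) is absolutely summable if and only if the product of the family (1 − ‖x_α‖)_{α∈Λ^{<b}} is strictly positive. -/
open Set

noncomputable section

/-- Transfinite partial sums of a family indexed by a well-ordered set `Λ` with
least element `a` and supremum `b`.  `F γ` represents `Σ_{α ∈ Λ, α < γ} x α` for
`γ ∈ Λ ∪ {b}`:  the sum over the empty initial segment is `0`, the successor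
recursion `F (S β) = x β + F β` holds, and at each limit element the partial
sums converge from the left. -/
def WOSumData {E : Type*} [SeminormedAddCommGroup E] {ι : Type*} [LinearOrder ι]
    (Λ : Set ι) (a b : ι) (x F : ι → E) : Prop :=
  F a = 0 ∧
  (∀ β ∈ Λ, ∀ γ ∈ Λ ∪ {b}, β < γ → (∀ α ∈ Λ, α ≤ β ∨ γ ≤ α) → F γ = x β + F β) ∧
  (∀ γ ∈ Λ ∪ {b}, a < γ → (∀ β ∈ Λ, β < γ → ∃ α ∈ Λ, β < α ∧ α < γ) →
    ∀ ε > 0, ∃ β₀ ∈ Λ, β₀ < γ ∧ ∀ β ∈ Λ, β₀ ≤ β → β < γ → ‖F β - F γ‖ < ε)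

/-- Transfinite partial products of a family indexed by a well-ordered set `Λ` with
least element `a` and supremum `b`.  `F γ` represents `Π_{α ∈ Λ, α < γ} x α` for
`γ ∈ Λ ∪ {b}`:  the product over the empty initial segment is `1`, the successor
recursion `F (S β) = x β * F β` holds, and at each limit element the partial
products converge from the left. -/
def WOProdData {E : Type*} [NormedRing E] {ι : Type*} [LinearOrder ι]
    (Λ : Set ι) (a b : ι) (x F : ι → E) : Prop :=
  F a = 1 ∧
  (∀ β ∈ Λ, ∀ γ ∈ Λ ∪ {b}, β < γ → (∀ α ∈ Λ, α ≤ β ∨ γ ≤ α) → F γ = x β * F β) ∧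
  (∀ γ ∈ Λ ∪ {b}, a < γ → (∀ β ∈ Λ, β < γ → ∃ α ∈ Λ, β < α ∧ α < γ) →
    ∀ ε > 0, ∃ β₀ ∈ Λ, β₀ < γ ∧ ∀ β ∈ Λ, β₀ ≤ β → β < γ → ‖F β - F γ‖ < ε)

/-!
Both conditions amount to summability of the unordered family `‖x α‖`, `α ∈ Λ`, `α < b`.
By transfinite induction over successor and limit elements, transfinite partial sums of a
nonnegative family dominate its finite subsums, and transfinite partial products of a family
with values in `[0, 1]` are dominated by its finite subproducts; with `1 - t ≤ exp (-t)` this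
bounds the finite sums of `‖x α‖` by `F b`, resp. by `-log (G b)`. Conversely, for a summable
family the sums over the initial segments `Λ ∩ Iio γ` are transfinite partial sums, and
exponentiating those of `log (1 - ‖x α‖)` gives transfinite partial products with positive value
at `b`.
-/

section IndicatorSum

variable {E : Type*} [NormedAddCommGroup E] [CompleteSpace E] {ι : Type*} {z : ι → E}
  {s t u : Set ι}

lemma Summable.indicator_of_subset (hu : Summable (u.indicator z)) (h : s ⊆ u) :
    Summable (s.indicator z) := by
  simpa [indicator_indicator, inter_eq_left.2 h] using hu.indicator s

lemma tsum_indicator_sub_of_subset (hu : Summable (u.indicator z)) (hst : s ⊆ t) (htu : t ⊆ u) :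
    ∑' α, t.indicator z α - ∑' α, s.indicator z α = ∑' α, (t \ s).indicator z α := by
  rw [indicator_sdiff' hst, ← (hu.indicator_of_subset htu).tsum_sub
    (hu.indicator_of_subset (hst.trans htu))]
  simp [sub_eq_add_neg]

end IndicatorSum

lemma summable_indicator_of_sum_le {ι : Type*} {s : Set ι} {z : ι → ℝ} {c : ℝ}
    (hz : ∀ α ∈ s, 0 ≤ z α) (h : ∀ S : Finset ι, ↑S ⊆ s → ∑ α ∈ S, z α ≤ c) :
    Summable (s.indicator z) := by
  classical
  refine summable_of_sum_le (c := c) (fun α => indicator_nonneg hz α) fun S => ?_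
  rw [Finset.sum_indicator_eq_sum_filter]
  exact h _ fun α hα => (Finset.mem_filter.1 hα).2

lemma Finset.prod_one_sub_le_exp_neg_sum {ι : Type*} {S : Finset ι} {t : ι → ℝ}
    (ht : ∀ i ∈ S, t i ≤ 1) : ∏ i ∈ S, (1 - t i) ≤ Real.exp (-∑ i ∈ S, t i) := by
  rw [← Finset.sum_neg_distrib, Real.exp_sum]
  exact Finset.prod_le_prod (fun i hi => sub_nonneg.2 (ht i hi)) fun i _ =>
    Real.one_sub_le_exp_neg _

section

variable {ι : Type*} [LinearOrder ι] {Λ : Set ι} {a b β₀ γ : ι}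

lemma inter_Iio_eq_empty_of_mem_lowerBounds (ha : a ∈ lowerBounds Λ) : Λ ∩ Iio a = ∅ :=
  eq_empty_of_forall_notMem fun _ hα => (ha hα.1).not_gt hα.2

lemma le_of_mem_union_singleton (hb : b ∈ upperBounds Λ) (hγ : γ ∈ Λ ∪ {b}) : γ ≤ b := by
  rcases hγ with hγ | rfl
  exacts [hb hγ, le_rfl]

lemma succ_or_limit (γ : ι) :
    (∃ β ∈ Λ, β < γ ∧ ∀ α ∈ Λ, α ≤ β ∨ γ ≤ α) ∨
      (∀ β ∈ Λ, β < γ → ∃ α ∈ Λ, β < α ∧ α < γ) := by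
  by_cases h : ∀ β ∈ Λ, β < γ → ∃ α ∈ Λ, β < α ∧ α < γ
  · exact Or.inr h
  · push Not at h
    obtain ⟨β, hβ, hβγ, hmax⟩ := h
    exact Or.inl ⟨β, hβ, hβγ, fun α hα => (le_or_gt α β).imp_right (hmax α hα)⟩

theorem Set.IsWF.induction_succ_limit (hWF : Λ.IsWF) (ha : IsLeast Λ a)
    (hb : b ∈ upperBounds Λ) {P : ι → Prop} (base : P a)
    (succ : ∀ β ∈ Λ, ∀ γ ∈ Λ ∪ {b}, β < γ → (∀ α ∈ Λ, α ≤ β ∨ γ ≤ α) → P β → P γ)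
    (limit : ∀ γ ∈ Λ ∪ {b}, a < γ → (∀ β ∈ Λ, β < γ → ∃ α ∈ Λ, β < α ∧ α < γ) →
      (∀ β ∈ Λ, β < γ → P β) → P γ) :
    ∀ γ ∈ Λ ∪ {b}, P γ := by
  intro γ hγ
  refine WellFoundedOn.induction (hWF.union (finite_singleton b).isWF) hγ fun γ hγ IH => ?_
  have haγ : a ≤ γ := by
    rcases hγ with hγ | rfl
    exacts [ha.2 hγ, hb ha.1]
  obtain rfl | haγ := haγ.eq_or_lt
  · exact base
  rcases succ_or_limit γ with ⟨β, hβ, hβγ, hgap⟩ | hlim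
  · exact succ β hβ γ hγ hβγ hgap (IH β (Or.inl hβ) hβγ)
  · exact limit γ hγ haγ hlim fun β hβ hβγ => IH β (Or.inl hβ) hβγ

lemma exists_between_of_limit (hlim : ∀ β ∈ Λ, β < γ → ∃ α ∈ Λ, β < α ∧ α < γ)
    (hβ₀ : β₀ ∈ Λ) (hβ₀γ : β₀ < γ) {S : Finset ι} (hS : ↑S ⊆ Λ ∩ Iio γ) :
    ∃ β ∈ Λ, β₀ < β ∧ β < γ ∧ ↑S ⊆ Iio β := by
  obtain ⟨m, hm, hmax⟩ := (insert β₀ S).exists_max_image id (Finset.insert_nonempty β₀ S)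
  have hm' : m ∈ Λ ∩ Iio γ := by
    rcases Finset.mem_insert.1 hm with rfl | h
    exacts [⟨hβ₀, hβ₀γ⟩, hS h]
  obtain ⟨β, hβ, hmβ, hβγ⟩ := hlim m hm'.1 hm'.2
  exact ⟨β, hβ, (hmax β₀ (Finset.mem_insert_self β₀ S)).trans_lt hmβ, hβγ,
    fun α hα => (hmax α (Finset.mem_insert_of_mem hα)).trans_lt hmβ⟩

lemma erase_subset_of_gap {β : ι} (hgap : ∀ α ∈ Λ, α ≤ β ∨ γ ≤ α) {S : Finset ι}
    (hS : ↑S ⊆ Λ ∩ Iio γ) : ↑(S.erase β) ⊆ Λ ∩ Iio β := by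
  intro α hα
  rw [Finset.coe_erase] at hα
  obtain ⟨hαΛ, hαγ⟩ := hS hα.1
  exact ⟨hαΛ, ((hgap α hαΛ).resolve_right hαγ.not_ge).lt_of_ne hα.2⟩

lemma mem_of_limit {E : Type*} [SeminormedAddCommGroup E] {F : ι → E} {C : Set E}
    (hC : IsClosed C)
    (hcont : ∀ ε > 0, ∃ β₀ ∈ Λ, β₀ < γ ∧ ∀ β ∈ Λ, β₀ ≤ β → β < γ → ‖F β - F γ‖ < ε)
    (hfreq : ∀ β₀ ∈ Λ, β₀ < γ → ∃ β ∈ Λ, β₀ ≤ β ∧ β < γ ∧ F β ∈ C) : F γ ∈ C := by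
  by_contra hγ
  obtain ⟨ε, hε, hball⟩ := Metric.isOpen_iff.1 hC.isOpen_compl _ hγ
  obtain ⟨β₀, hβ₀, hβ₀γ, hclose⟩ := hcont ε hε
  obtain ⟨β, hβ, hβ₀β, hβγ, hβC⟩ := hfreq β₀ hβ₀ hβ₀γ
  exact hball (mem_ball_iff_norm.2 (hclose β hβ hβ₀β hβγ)) hβC

theorem WOSumData.sum_le (hWF : Λ.IsWF) (ha : IsLeast Λ a) (hb : b ∈ upperBounds Λ)
    {z F : ι → ℝ} (hz : ∀ α ∈ Λ, 0 ≤ z α) (hF : WOSumData Λ a b z F) :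
    ∀ γ ∈ Λ ∪ {b}, ∀ S : Finset ι, ↑S ⊆ Λ ∩ Iio γ → ∑ α ∈ S, z α ≤ F γ := by
  classical
  refine hWF.induction_succ_limit ha hb ?_ ?_ ?_
  · intro S hS
    rw [Finset.eq_empty_of_forall_notMem fun α hα =>
      (inter_Iio_eq_empty_of_mem_lowerBounds ha.2).subset (hS hα), Finset.sum_empty, hF.1]
  · intro β hβ γ hγ hβγ hgap IH S hS
    calc ∑ α ∈ S, z α ≤ ∑ α ∈ insert β (S.erase β), z α :=
          Finset.sum_le_sum_of_subset_of_nonneg (Finset.insert_erase_subset β S)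
            fun α hα hαS => by
              rcases Finset.mem_insert.1 hα with rfl | h
              · exact hz α hβ
              · exact absurd (Finset.mem_of_mem_erase h) hαS
      _ = z β + ∑ α ∈ S.erase β, z α := Finset.sum_insert (Finset.notMem_erase β S)
      _ ≤ z β + F β := add_le_add_right (IH _ (erase_subset_of_gap hgap hS)) _
      _ = F γ := (hF.2.1 β hβ γ hγ hβγ hgap).symm
  · intro γ hγ haγ hlim IH S hS
    refine mem_of_limit (F := F) (C := Ici _) isClosed_Ici (hF.2.2 γ hγ haγ hlim)
      fun β₀ hβ₀ hβ₀γ => ?_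
    obtain ⟨β, hβ, hβ₀β, hβγ, hSβ⟩ := exists_between_of_limit hlim hβ₀ hβ₀γ hS
    exact ⟨β, hβ, hβ₀β.le, hβγ, IH β hβ hβγ S fun α hα => ⟨(hS hα).1, hSβ hα⟩⟩

theorem WOProdData.le_prod (hWF : Λ.IsWF) (ha : IsLeast Λ a) (hb : b ∈ upperBounds Λ)
    {w G : ι → ℝ} (hw0 : ∀ α ∈ Λ, α < b → 0 ≤ w α) (hw1 : ∀ α ∈ Λ, α < b → w α ≤ 1)
    (hG : WOProdData Λ a b w G) :
    ∀ γ ∈ Λ ∪ {b}, ∀ S : Finset ι, ↑S ⊆ Λ ∩ Iio γ → G γ ≤ ∏ α ∈ S, w α := by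
  classical
  refine hWF.induction_succ_limit ha hb ?_ ?_ ?_
  · intro S hS
    rw [Finset.eq_empty_of_forall_notMem fun α hα =>
      (inter_Iio_eq_empty_of_mem_lowerBounds ha.2).subset (hS hα), Finset.prod_empty, hG.1]
  · intro β hβ γ hγ hβγ hgap IH S hS
    have hγb := le_of_mem_union_singleton hb hγ
    have hmem : ∀ α ∈ insert β (S.erase β), α ∈ Λ ∧ α < b := fun α hα => by
      rcases Finset.mem_insert.1 hα with rfl | h
      · exact ⟨hβ, hβγ.trans_le hγb⟩
      · obtain ⟨hαΛ, hαγ⟩ := hS (Finset.mem_of_mem_erase h)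
        exact ⟨hαΛ, hαγ.trans_le hγb⟩
    calc G γ = w β * G β := hG.2.1 β hβ γ hγ hβγ hgap
      _ ≤ w β * ∏ α ∈ S.erase β, w α :=
          mul_le_mul_of_nonneg_left (IH _ (erase_subset_of_gap hgap hS))
            (hw0 β hβ (hβγ.trans_le hγb))
      _ = ∏ α ∈ insert β (S.erase β), w α := (Finset.prod_insert (Finset.notMem_erase β S)).symm
      _ ≤ ∏ α ∈ S, w α :=
          Finset.prod_le_prod_of_subset_of_le_one (Finset.insert_erase_subset β S)
            (fun α hα => hw0 α (hmem α hα).1 (hmem α hα).2)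
            fun α hα _ => hw1 α (hmem α hα).1 (hmem α hα).2
  · intro γ hγ haγ hlim IH S hS
    refine mem_of_limit (F := G) (C := Iic _) isClosed_Iic (hG.2.2 γ hγ haγ hlim)
      fun β₀ hβ₀ hβ₀γ => ?_
    obtain ⟨β, hβ, hβ₀β, hβγ, hSβ⟩ := exists_between_of_limit hlim hβ₀ hβ₀γ hS
    exact ⟨β, hβ, hβ₀β.le, hβγ, IH β hβ hβγ S fun α hα => ⟨(hS hα).1, hSβ hα⟩⟩

theorem WOSumData.exp {z H : ι → ℝ} (hH : WOSumData Λ a b z H) :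
    WOProdData Λ a b (fun α => Real.exp (z α)) (fun γ => Real.exp (H γ)) := by
  obtain ⟨h0, hsucc, hlim⟩ := hH
  refine ⟨by simp [h0],
    fun β hβ γ hγ hβγ hgap => by simp [hsucc β hβ γ hγ hβγ hgap, Real.exp_add],
    fun γ hγ haγ hrich ε hε => ?_⟩
  obtain ⟨δ, hδ, hexp⟩ := Metric.continuousAt_iff.1 Real.continuous_exp.continuousAt ε hε
  obtain ⟨β₀, hβ₀, hβ₀γ, hclose⟩ := hlim γ hγ haγ hrich δ hδ
  exact ⟨β₀, hβ₀, hβ₀γ, fun β hβ hβ₀β hβγ => hexp (hclose β hβ hβ₀β hβγ)⟩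

theorem WOProdData.congr {E : Type*} [NormedRing E] (hb : b ∈ upperBounds Λ) {w w' G : ι → E}
    (h : ∀ α ∈ Λ, α < b → w α = w' α) (hG : WOProdData Λ a b w G) : WOProdData Λ a b w' G :=
  ⟨hG.1, fun β hβ γ hγ hβγ hgap => by
    rw [← h β hβ (hβγ.trans_le (le_of_mem_union_singleton hb hγ))]
    exact hG.2.1 β hβ γ hγ hβγ hgap, hG.2.2⟩

theorem woSumData_tsum_indicator {E : Type*} [NormedAddCommGroup E] [CompleteSpace E]
    {z : ι → E} (ha : IsLeast Λ a) (hb : b ∈ upperBounds Λ)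
    (hz : Summable ((Λ ∩ Iio b).indicator z)) :
    WOSumData Λ a b z fun γ => ∑' α, (Λ ∩ Iio γ).indicator z α := by
  classical
  have hsub : ∀ γ ∈ Λ ∪ {b}, Λ ∩ Iio γ ⊆ Λ ∩ Iio b := fun γ hγ =>
    inter_subset_inter_right _ (Iio_subset_Iio (le_of_mem_union_singleton hb hγ))
  refine ⟨?_, fun β hβ γ hγ hβγ hgap => ?_, fun γ hγ haγ hlim ε hε => ?_⟩
  · show ∑' α, (Λ ∩ Iio a).indicator z α = 0
    simp [inter_Iio_eq_empty_of_mem_lowerBounds ha.2]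
  · have hstep : (Λ ∩ Iio γ) \ (Λ ∩ Iio β) = {β} := by
      ext α
      simp only [mem_sdiff, mem_inter_iff, mem_Iio, mem_singleton_iff, not_and, not_lt]
      constructor
      · rintro ⟨⟨hαΛ, hαγ⟩, hβα⟩
        exact le_antisymm ((hgap α hαΛ).resolve_right hαγ.not_ge) (hβα hαΛ)
      · rintro rfl
        exact ⟨⟨hβ, hβγ⟩, fun _ => le_rfl⟩
    refine eq_add_of_sub_eq ?_
    rw [tsum_indicator_sub_of_subset hz (inter_subset_inter_right _ (Iio_subset_Iio hβγ.le))
      (hsub γ hγ), hstep, indicator_singleton, tsum_pi_single]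
  · obtain ⟨T, hT⟩ := hz.tsum_vanishing (Metric.ball_mem_nhds 0 hε)
    obtain ⟨β₀, hβ₀, -, hβ₀γ, hTβ₀⟩ := exists_between_of_limit hlim ha.1 haγ
      (S := T.filter (· ∈ Λ ∩ Iio γ)) fun α hα => (Finset.mem_filter.1 hα).2
    refine ⟨β₀, hβ₀, hβ₀γ, fun β hβ hβ₀β hβγ => ?_⟩
    have hD : Disjoint ((Λ ∩ Iio γ) \ (Λ ∩ Iio β)) ↑T := disjoint_left.2 fun α hαD hαT =>
      hαD.2 ⟨hαD.1.1, (hTβ₀ (Finset.mem_filter.2 ⟨hαT, hαD.1⟩)).trans_le hβ₀β⟩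
    have hvanish := hT _ hD
    rw [tsum_subtype, indicator_indicator, inter_eq_left.2 (sdiff_subset.trans (hsub γ hγ))]
      at hvanish
    rw [← norm_neg, neg_sub, tsum_indicator_sub_of_subset hz
      (inter_subset_inter_right _ (Iio_subset_Iio hβγ.le)) (hsub γ hγ)]
    exact mem_ball_zero_iff.1 hvanish

theorem WOSumData.summable_indicator (hWF : Λ.IsWF) (ha : IsLeast Λ a)
    (hb : b ∈ upperBounds Λ) {z F : ι → ℝ} (hz : ∀ α ∈ Λ, 0 ≤ z α)
    (hF : WOSumData Λ a b z F) : Summable ((Λ ∩ Iio b).indicator z) :=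
  summable_indicator_of_sum_le (fun α hα => hz α hα.1) (hF.sum_le hWF ha hb hz b (Or.inr rfl))

end

theorem stmt8_general {E : Type*} [NormedAddCommGroup E]
    {Λ : Set (WithTop ℝ)} {a b : WithTop ℝ} (hWF : Λ.IsWF)
    (ha : IsLeast Λ a) (hb : IsLUB Λ b)
    (x : WithTop ℝ → E)
    (hsmall : ∀ α ∈ Λ, α < b → ‖x α‖ < 1) :
    (∃ F : WithTop ℝ → ℝ, WOSumData Λ a b (fun α => ‖x α‖) F) ↔
      (∃ G : WithTop ℝ → ℝ, WOProdData Λ a b (fun α => 1 - ‖x α‖) G ∧ 0 < G b) := by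
  constructor
  · rintro ⟨F, hF⟩
    have hnorm := hF.summable_indicator hWF ha hb.1 fun α _ => norm_nonneg (x α)
    have hlog : Summable ((Λ ∩ Iio b).indicator fun α => Real.log (1 - ‖x α‖)) := by
      convert Real.summable_log_one_add_of_summable hnorm.neg using 1
      ext α
      by_cases h : α ∈ Λ ∩ Iio b <;> simp [h, sub_eq_add_neg]
    refine ⟨_, (woSumData_tsum_indicator ha hb.1 hlog).exp.congr hb.1 fun α hα hαb =>
      Real.exp_log (sub_pos.2 (hsmall α hα hαb)), Real.exp_pos _⟩
  · rintro ⟨G, hG, hGb⟩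
    have hbound (S : Finset (WithTop ℝ)) (hS : ↑S ⊆ Λ ∩ Iio b) :
        ∑ α ∈ S, ‖x α‖ ≤ -Real.log (G b) := by
      rw [le_neg, Real.log_le_iff_le_exp hGb]
      calc G b ≤ ∏ α ∈ S, (1 - ‖x α‖) :=
            hG.le_prod hWF ha hb.1 (fun α hα hαb => sub_nonneg.2 (hsmall α hα hαb).le)
              (fun α _ _ => sub_le_self _ (norm_nonneg _)) b (Or.inr rfl) S hS
        _ ≤ Real.exp (-∑ α ∈ S, ‖x α‖) :=
            Finset.prod_one_sub_le_exp_neg_sum fun α hα => (hsmall α (hS hα).1 (hS hα).2).le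
    exact ⟨_, woSumData_tsum_indicator ha hb.1
      (summable_indicator_of_sum_le (fun α _ => norm_nonneg _) hbound)⟩

/-- For a family with ‖x α‖ < 1, absolute summability is equivalent to the product
of the family (1 − ‖x α‖) being strictly positive. -/
theorem stmt8 {E : Type*} [NormedAddCommGroup E] [NormedSpace ℝ E]
    {Λ : Set (WithTop ℝ)} {a b : WithTop ℝ} (hWF : Λ.IsWF)
    (ha : IsLeast Λ a) (hb : IsLUB Λ b)
    (x : WithTop ℝ → E)
    (hsmall : ∀ α ∈ Λ, α < b → ‖x α‖ < 1) :
    (∃ F : WithTop ℝ → ℝ, WOSumData Λ a b (fun α => ‖x α‖) F) ↔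
      (∃ G : WithTop ℝ → ℝ, WOProdData Λ a b (fun α => 1 - ‖x α‖) G ∧ 0 < G b) :=
  stmt8_general hWF ha hb x hsmall
end
end

section
/- Let f : [a,b] → E be strongly Henstock-Kurzweil integrable with primitive F(t) = ∫_a^t f(s) ds. Then the strong Kurzweil-Stieltjes product integral ∏_a^b (I + dF(t)) exists if and only if the strong Kurzweil product integral ∏_a^b (I + f(t) dt) exists, and in that case the two integrals are equal. -/
open Set

noncomputable section

/-- A gauge on `[a,b]`: a function positive on `[a,b]`. -/
def IsGauge (a b : ℝ) (δ : ℝ → ℝ) : Prop := ∀ s ∈ Set.Icc a b, 0 < δ s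

/-- `(m, t, ξ)` encodes a tagged partition `a = t 0 < t 1 < ⋯ < t m = b` with tags
`ξ i ∈ [t i, t (i+1)]` for `i < m`. -/
def IsTaggedPartition (a b : ℝ) (m : ℕ) (t ξ : ℕ → ℝ) : Prop :=
  t 0 = a ∧ t m = b ∧ (∀ i < m, t i < t (i + 1)) ∧
    ∀ i < m, ξ i ∈ Set.Icc (t i) (t (i + 1))

/-- A tagged partition is `δ`-fine if each `[t i, t (i+1)] ⊆ (ξ i - δ (ξ i), ξ i + δ (ξ i))`. -/
def IsFinePartition (δ : ℝ → ℝ) (m : ℕ) (t ξ : ℕ → ℝ) : Prop :=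
  ∀ i < m, ξ i - δ (ξ i) < t i ∧ t (i + 1) < ξ i + δ (ξ i)

/-- The right-to-left product `V(ξ_{k-1},[t_{k-1},t_k]) ⋯ V(ξ_0,[t_0,t_1])` associated with a
point-interval function `V` (where `V ξ x y` stands for `V(ξ,[x,y])`). -/
def partProd {E : Type*} [NormedRing E] (V : ℝ → ℝ → ℝ → E) (t ξ : ℕ → ℝ) : ℕ → E
  | 0 => 1
  | k + 1 => V (ξ k) (t k) (t (k + 1)) * partProd V t ξ k

/-- `V` is strongly Kurzweil product integrable with integral `P`:  there is `W` with
invertible values, `W` and `W⁻¹` bounded, `P = W(b) W(a)⁻¹`, and the Riemann-type sums of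
`‖V(ξᵢ,[tᵢ₋₁,tᵢ]) − W(tᵢ)W(tᵢ₋₁)⁻¹‖` can be made arbitrarily small on δ-fine tagged
partitions. -/
def StrongKurzweilProdIntegrable {E : Type*} [NormedRing E]
    (a b : ℝ) (V : ℝ → ℝ → ℝ → E) (P : E) : Prop :=
  ∃ W Winv : ℝ → E,
    (∀ s ∈ Set.Icc a b, W s * Winv s = 1 ∧ Winv s * W s = 1) ∧
    (∃ M : ℝ, ∀ s ∈ Set.Icc a b, ‖W s‖ ≤ M ∧ ‖Winv s‖ ≤ M) ∧
    P = W b * Winv a ∧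
    ∀ ε > 0, ∃ δ : ℝ → ℝ, IsGauge a b δ ∧
      ∀ m t ξ, IsTaggedPartition a b m t ξ → IsFinePartition δ m t ξ →
        ∑ i ∈ Finset.range m,
          ‖V (ξ i) (t i) (t (i + 1)) - W (t (i + 1)) * Winv (t i)‖ < ε

/-- `V` is Kurzweil product integrable with (invertible) integral `P`. -/
def KurzweilProdIntegrable {E : Type*} [NormedRing E]
    (a b : ℝ) (V : ℝ → ℝ → ℝ → E) (P : E) : Prop :=
  IsUnit P ∧
    ∀ ε > 0, ∃ δ : ℝ → ℝ, IsGauge a b δ ∧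
      ∀ m t ξ, IsTaggedPartition a b m t ξ → IsFinePartition δ m t ξ →
        ‖partProd V t ξ m - P‖ < ε

/-- `V` is Riemann product integrable with (invertible) integral `P`: as Kurzweil
product integrability, but with constant gauges. -/
def RiemannProdIntegrable {E : Type*} [NormedRing E]
    (a b : ℝ) (V : ℝ → ℝ → ℝ → E) (P : E) : Prop :=
  IsUnit P ∧
    ∀ ε > 0, ∃ δ : ℝ, 0 < δ ∧
      ∀ m t ξ, IsTaggedPartition a b m t ξ → IsFinePartition (fun _ => δ) m t ξ →
        ‖partProd V t ξ m - P‖ < ε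

lemma extend_partition (a x y c : ℝ) (δ : ℝ → ℝ) (m : ℕ) (t ξ : ℕ → ℝ)
    (hp : IsTaggedPartition a x m t ξ) (hf : IsFinePartition δ m t ξ)
    (hxy : x < y) (hxc : x ≤ c) (hcy : c ≤ y) (h1 : c - δ c < x) (h2 : y < c + δ c) :
    ∃ t' ξ' : ℕ → ℝ, IsTaggedPartition a y (m + 1) t' ξ' ∧ IsFinePartition δ (m + 1) t' ξ' := by
  obtain ⟨ht0, htm, hlt, htag⟩ := hp
  refine ⟨fun i => if i ≤ m then t i else y, fun i => if i < m then ξ i else c, ⟨?_, ?_, ?_, ?_⟩, ?_⟩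
  · simp [Nat.zero_le]; exact ht0
  · simp
  · intro i hi
    rcases lt_or_eq_of_le (Nat.lt_succ_iff.mp hi) with h | h
    · simp [Nat.le_of_lt h, Nat.succ_le_of_lt h]; exact hlt i h
    · subst h; simp [le_refl]; rw [htm]; exact hxy
  · intro i hi
    rcases lt_or_eq_of_le (Nat.lt_succ_iff.mp hi) with h | h
    · simp [h, Nat.le_of_lt h, Nat.succ_le_of_lt h]; exact htag i h
    · subst h
      simp [le_refl]
      rw [htm]
      exact ⟨hxc, hcy⟩
  · intro i hi
    rcases lt_or_eq_of_le (Nat.lt_succ_iff.mp hi) with h | h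
    · simp [h, Nat.le_of_lt h, Nat.succ_le_of_lt h]; exact hf i h
    · subst h
      simp [le_refl]
      rw [htm]
      exact ⟨h1, h2⟩

lemma cousin (a b : ℝ) (hab : a < b) (δ : ℝ → ℝ) (hδ : IsGauge a b δ) :
    ∃ m t ξ, IsTaggedPartition a b m t ξ ∧ IsFinePartition δ m t ξ := by
  have hδa : 0 < δ a := hδ a ⟨le_refl a, le_of_lt hab⟩
  have triv : IsTaggedPartition a a 0 (fun _ => a) (fun _ => a) :=
    ⟨rfl, rfl, fun i hi => absurd hi (Nat.not_lt_zero i), fun i hi => absurd hi (Nat.not_lt_zero i)⟩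
  have trivf : IsFinePartition δ 0 (fun _ => a) (fun _ => a) :=
    fun i hi => absurd hi (Nat.not_lt_zero i)
  set S : Set ℝ := {x | a < x ∧ x ≤ b ∧
    ∃ m t ξ, IsTaggedPartition a x m t ξ ∧ IsFinePartition δ m t ξ} with hS
  have hx0 : min b (a + δ a / 2) ∈ S := by
    constructor
    · exact lt_min hab (by linarith)
    refine ⟨min_le_left _ _, ?_⟩
    obtain ⟨t', ξ', hp, hf⟩ := extend_partition a a (min b (a + δ a / 2)) a δ 0
      (fun _ => a) (fun _ => a) triv trivf (lt_min hab (by linarith)) le_rfl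
      (le_of_lt (lt_min hab (by linarith))) (by linarith)
      (lt_of_le_of_lt (min_le_right _ _) (by linarith))
    exact ⟨1, t', ξ', hp, hf⟩
  have hne : S.Nonempty := ⟨_, hx0⟩
  have hbdd : BddAbove S := ⟨b, fun x hx => hx.2.1⟩
  set c := sSup S with hc
  have hac : a < c := lt_of_lt_of_le hx0.1 (le_csSup hbdd hx0)
  have hcb : c ≤ b := csSup_le hne (fun x hx => hx.2.1)
  have hδc : 0 < δ c := hδ c ⟨le_of_lt hac, hcb⟩
  obtain ⟨x, hxS, hxlt⟩ := exists_lt_of_lt_csSup hne (show c - δ c < c by linarith)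
  have hxc : x ≤ c := le_csSup hbdd hxS
  obtain ⟨hax, hxb, mx, tx, ξx, hpx, hfx⟩ := hxS
  rcases eq_or_lt_of_le hxb with hxb' | hxb'
  · subst hxb'; exact ⟨mx, tx, ξx, hpx, hfx⟩
  rcases eq_or_lt_of_le hcb with hcb' | hcb'
  · obtain ⟨t', ξ', hp, hf⟩ := extend_partition a x b c δ mx tx ξx hpx hfx hxb'
      hxc hcb'.le hxlt (by rw [hcb'] at hδc ⊢; linarith)
    exact ⟨mx + 1, t', ξ', hp, hf⟩
  · exfalso
    set y := min b (c + δ c / 2) with hy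
    have hcy : c < y := lt_min hcb' (by linarith)
    have hyS : y ∈ S := by
      refine ⟨hac.trans hcy, min_le_left _ _, ?_⟩
      obtain ⟨t', ξ', hp, hf⟩ := extend_partition a x y c δ mx tx ξx hpx hfx
        (lt_of_le_of_lt hxc hcy) hxc (le_of_lt hcy) hxlt
        (lt_of_le_of_lt (min_le_right _ _) (by linarith))
      exact ⟨mx + 1, t', ξ', hp, hf⟩
    exact absurd (le_csSup hbdd hyS) (not_le.mpr hcy)

lemma fine_of_le {δ δ' : ℝ → ℝ} (h : ∀ s, δ' s ≤ δ s) {m : ℕ} {t ξ : ℕ → ℝ}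
    (hf : IsFinePartition δ' m t ξ) : IsFinePartition δ m t ξ := by
  intro i hi
  obtain ⟨h1, h2⟩ := hf i hi
  have := h (ξ i)
  exact ⟨by linarith, by linarith⟩

lemma partition_mem {a b : ℝ} {m : ℕ} {t ξ : ℕ → ℝ}
    (hp : IsTaggedPartition a b m t ξ) : ∀ k ≤ m, t k ∈ Set.Icc a b := by
  obtain ⟨ht0, htm, hlt, -⟩ := hp
  have mono : ∀ i j, i ≤ j → j ≤ m → t i ≤ t j := by
    intro i j hij hjm
    induction j with
    | zero => simp_all
    | succ n ih =>
      rcases Nat.lt_or_ge i (n + 1) with h | h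
      · exact le_trans (ih (Nat.lt_succ_iff.mp h) (le_trans (Nat.le_succ n) hjm))
          (le_of_lt (hlt n (Nat.lt_of_succ_le hjm)))
      · have : i = n + 1 := le_antisymm hij h
        simp [this]
  intro k hk
  exact ⟨ht0 ▸ mono 0 k (Nat.zero_le k) hk, htm ▸ mono k m hk le_rfl⟩

lemma transfer_skpi {E : Type*} [NormedRing E] (a b : ℝ) (V₁ V₂ : ℝ → ℝ → ℝ → E) (P : E)
    (h : ∀ ε > 0, ∃ δ : ℝ → ℝ, IsGauge a b δ ∧
      ∀ m t ξ, IsTaggedPartition a b m t ξ → IsFinePartition δ m t ξ →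
        ∑ i ∈ Finset.range m,
          ‖V₂ (ξ i) (t i) (t (i + 1)) - V₁ (ξ i) (t i) (t (i + 1))‖ < ε)
    (hP : StrongKurzweilProdIntegrable a b V₁ P) :
    StrongKurzweilProdIntegrable a b V₂ P := by
  obtain ⟨W, Winv, hinv, hbd, hPeq, hconv⟩ := hP
  refine ⟨W, Winv, hinv, hbd, hPeq, ?_⟩
  intro ε hε
  obtain ⟨δ₁, hδ₁, h1⟩ := hconv (ε / 2) (by linarith)
  obtain ⟨δ₂, hδ₂, h2⟩ := h (ε / 2) (by linarith)
  refine ⟨fun s => min (δ₁ s) (δ₂ s), fun s hs => lt_min (hδ₁ s hs) (hδ₂ s hs), ?_⟩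
  intro m t ξ hp hf
  have hf1 := fine_of_le (fun s => min_le_left (δ₁ s) (δ₂ s)) hf
  have hf2 := fine_of_le (fun s => min_le_right (δ₁ s) (δ₂ s)) hf
  calc ∑ i ∈ Finset.range m, ‖V₂ (ξ i) (t i) (t (i + 1)) - W (t (i + 1)) * Winv (t i)‖
      ≤ ∑ i ∈ Finset.range m, (‖V₂ (ξ i) (t i) (t (i + 1)) - V₁ (ξ i) (t i) (t (i + 1))‖ +
          ‖V₁ (ξ i) (t i) (t (i + 1)) - W (t (i + 1)) * Winv (t i)‖) := by
        refine Finset.sum_le_sum fun i _ => ?_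
        calc ‖V₂ (ξ i) (t i) (t (i + 1)) - W (t (i + 1)) * Winv (t i)‖
            = ‖(V₂ (ξ i) (t i) (t (i + 1)) - V₁ (ξ i) (t i) (t (i + 1))) +
                (V₁ (ξ i) (t i) (t (i + 1)) - W (t (i + 1)) * Winv (t i))‖ := by
              rw [sub_add_sub_cancel]
          _ ≤ _ := norm_add_le _ _
    _ = _ + _ := Finset.sum_add_distrib
    _ < ε / 2 + ε / 2 := add_lt_add (h2 m t ξ hp hf2) (h1 m t ξ hp hf1)
    _ = ε := by ring

lemma aux_cancel {E : Type*} [Ring E] (u v w z : E) (h : v * w = 1) :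
    u * v * (w * z) = u * z := by
  rw [mul_assoc u v (w * z), ← mul_assoc v w z, h, one_mul]

/-- If f is strongly Henstock-Kurzweil integrable with primitive F, then the strong
Kurzweil-Stieltjes product integral ∏(I + dF(t)) exists iff the strong Kurzweil
product integral ∏(I + f(t) dt) exists, and the two integrals coincide. -/
theorem stmt19 {E : Type*} [NormedRing E] [NormedAlgebra ℝ E] [NormOneClass E]
    (a b : ℝ) (hab : a < b) (f F : ℝ → E) (hFa : F a = 0)
    (hHK : ∀ ε > 0, ∃ δ : ℝ → ℝ, IsGauge a b δ ∧
      ∀ m t ξ, IsTaggedPartition a b m t ξ → IsFinePartition δ m t ξ →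
        ∑ i ∈ Finset.range m,
          ‖(t (i + 1) - t i) • f (ξ i) - (F (t (i + 1)) - F (t i))‖ < ε) :
    ((∃ P : E, StrongKurzweilProdIntegrable a b (fun _ x y => 1 + F y - F x) P) ↔
      (∃ P : E, StrongKurzweilProdIntegrable a b (fun ξ x y => 1 + (y - x) • f ξ) P)) ∧
    (∀ P Q : E,
      StrongKurzweilProdIntegrable a b (fun _ x y => 1 + F y - F x) P →
      StrongKurzweilProdIntegrable a b (fun ξ x y => 1 + (y - x) • f ξ) Q →
      P = Q) := by
  -- hHK, rephrased as closeness of the two point-interval functions, both ways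
  have hHK₁ : ∀ ε > 0, ∃ δ : ℝ → ℝ, IsGauge a b δ ∧
      ∀ m t ξ, IsTaggedPartition a b m t ξ → IsFinePartition δ m t ξ →
        ∑ i ∈ Finset.range m,
          ‖(1 + (t (i + 1) - t i) • f (ξ i)) - (1 + F (t (i + 1)) - F (t i))‖ < ε := by
    intro ε hε
    obtain ⟨δ, hδ, h⟩ := hHK ε hε
    refine ⟨δ, hδ, fun m t ξ hp hf => ?_⟩
    refine lt_of_le_of_lt (le_of_eq (Finset.sum_congr rfl fun i _ => ?_)) (h m t ξ hp hf)
    congr 1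
    abel
  have hHK₂ : ∀ ε > 0, ∃ δ : ℝ → ℝ, IsGauge a b δ ∧
      ∀ m t ξ, IsTaggedPartition a b m t ξ → IsFinePartition δ m t ξ →
        ∑ i ∈ Finset.range m,
          ‖(1 + F (t (i + 1)) - F (t i)) - (1 + (t (i + 1) - t i) • f (ξ i))‖ < ε := by
    intro ε hε
    obtain ⟨δ, hδ, h⟩ := hHK₁ ε hε
    refine ⟨δ, hδ, fun m t ξ hp hf => ?_⟩
    refine lt_of_le_of_lt (le_of_eq (Finset.sum_congr rfl fun i _ => ?_)) (h m t ξ hp hf)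
    rw [norm_sub_rev]
  constructor
  · constructor
    · rintro ⟨P, hP⟩
      exact ⟨P, transfer_skpi a b _ _ P hHK₁ hP⟩
    · rintro ⟨P, hP⟩
      exact ⟨P, transfer_skpi a b _ _ P hHK₂ hP⟩
  · intro P Q hP hQ
    obtain ⟨W, Winv, hinv, ⟨M, hM⟩, hPeq, hconvP⟩ := hP
    obtain ⟨W', W'inv, hinv', ⟨M', hM'⟩, hQeq, hconvQ⟩ := hQ
    have hbmem : b ∈ Set.Icc a b := ⟨hab.le, le_rfl⟩
    have hamem : a ∈ Set.Icc a b := ⟨le_rfl, hab.le⟩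
    have hM0 : 0 ≤ M := le_trans (norm_nonneg _) (hM b hbmem).1
    have hM'0 : 0 ≤ M' := le_trans (norm_nonneg _) (hM' b hbmem).1
    set C := M * M * (M' * M') with hCdef
    have hC0 : 0 ≤ C := by positivity
    have key : ∀ η > 0, ‖P - Q‖ < η := by
      intro η hη
      have hC1 : (0:ℝ) < 3 * C + 1 := by linarith
      set ε := η / (3 * C + 1) with hεdef
      have hε : 0 < ε := div_pos hη hC1
      obtain ⟨δ₁, hδ₁, h1⟩ := hconvP ε hε
      obtain ⟨δ₂, hδ₂, h2⟩ := hconvQ ε hε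
      obtain ⟨δ₃, hδ₃, h3⟩ := hHK ε hε
      obtain ⟨m, t, ξ, hp, hf⟩ := cousin a b hab
        (fun s => min (δ₁ s) (min (δ₂ s) (δ₃ s)))
        (fun s hs => lt_min (hδ₁ s hs) (lt_min (hδ₂ s hs) (hδ₃ s hs)))
      have hf1 := fine_of_le (fun s => min_le_left (δ₁ s) _) hf
      have hf2 := fine_of_le (fun s => le_trans (min_le_right (δ₁ s) _) (min_le_left _ _)) hf
      have hf3 := fine_of_le (fun s => le_trans (min_le_right (δ₁ s) _) (min_le_right _ _)) hf
      have hs1 := h1 m t ξ hp hf1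
      have hs2 := h2 m t ξ hp hf2
      have hs3 := h3 m t ξ hp hf3
      have hmem := partition_mem hp
      -- sum over the W/W' increments
      have hsum : ∑ i ∈ Finset.range m,
          ‖W (t (i + 1)) * Winv (t i) - W' (t (i + 1)) * W'inv (t i)‖ < 3 * ε := by
        calc ∑ i ∈ Finset.range m,
            ‖W (t (i + 1)) * Winv (t i) - W' (t (i + 1)) * W'inv (t i)‖
            ≤ ∑ i ∈ Finset.range m,
              (‖(1 + F (t (i + 1)) - F (t i)) - W (t (i + 1)) * Winv (t i)‖ +
                (‖(t (i + 1) - t i) • f (ξ i) - (F (t (i + 1)) - F (t i))‖ +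
                  ‖(1 + (t (i + 1) - t i) • f (ξ i)) - W' (t (i + 1)) * W'inv (t i)‖)) := by
              refine Finset.sum_le_sum fun i _ => ?_
              have e : W (t (i + 1)) * Winv (t i) - W' (t (i + 1)) * W'inv (t i) =
                  (W (t (i + 1)) * Winv (t i) - (1 + F (t (i + 1)) - F (t i))) +
                  (((1 + F (t (i + 1)) - F (t i)) - (1 + (t (i + 1) - t i) • f (ξ i))) +
                    ((1 + (t (i + 1) - t i) • f (ξ i)) - W' (t (i + 1)) * W'inv (t i))) := by
                abel
              rw [e]
              refine le_trans (norm_add_le _ _) ?_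
              refine add_le_add ?_ (le_trans (norm_add_le _ _) (add_le_add ?_ le_rfl))
              · rw [norm_sub_rev]
              · rw [norm_sub_rev]
                apply le_of_eq
                congr 1
                abel
          _ = _ + _ := Finset.sum_add_distrib
          _ = _ + (_ + _) := by rw [Finset.sum_add_distrib]
          _ < ε + (ε + ε) := add_lt_add hs1 (add_lt_add hs3 hs2)
          _ = 3 * ε := by ring
      -- telescoping identity
      have hPQ : P - Q = ∑ k ∈ Finset.range m,
          (W b * Winv (t k) * (W' (t k) * W'inv a) -
            W b * Winv (t (k + 1)) * (W' (t (k + 1)) * W'inv a)) := by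
        rw [Finset.sum_range_sub' (fun k => W b * Winv (t k) * (W' (t k) * W'inv a)) m]
        simp only [hp.1, hp.2.1]
        rw [(hinv' a hamem).1, mul_one, ← mul_assoc, (hinv b hbmem).1, one_mul,
          ← hPeq, ← hQeq]
      have hgs : ∀ k < m,
          W b * Winv (t k) * (W' (t k) * W'inv a) -
            W b * Winv (t (k + 1)) * (W' (t (k + 1)) * W'inv a) =
          W b * Winv (t (k + 1)) *
            (W (t (k + 1)) * Winv (t k) - W' (t (k + 1)) * W'inv (t k)) *
            (W' (t k) * W'inv a) := by
        intro k hk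
        have hk1 : t (k + 1) ∈ Set.Icc a b := hmem (k + 1) hk
        have hk0 : t k ∈ Set.Icc a b := hmem k hk.le
        have e1 : W b * Winv (t (k + 1)) * (W (t (k + 1)) * Winv (t k)) =
            W b * Winv (t k) := aux_cancel _ _ _ _ (hinv _ hk1).2
        have e2 : W' (t (k + 1)) * W'inv (t k) * (W' (t k) * W'inv a) =
            W' (t (k + 1)) * W'inv a := aux_cancel _ _ _ _ (hinv' _ hk0).2
        rw [mul_sub, sub_mul, e1,
          mul_assoc (W b * Winv (t (k + 1))) (W' (t (k + 1)) * W'inv (t k)) _, e2]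
      have hbound : ‖P - Q‖ ≤ C * (3 * ε) := by
        calc ‖P - Q‖ = ‖∑ k ∈ Finset.range m,
              (W b * Winv (t k) * (W' (t k) * W'inv a) -
                W b * Winv (t (k + 1)) * (W' (t (k + 1)) * W'inv a))‖ := by rw [hPQ]
          _ ≤ ∑ k ∈ Finset.range m,
              ‖W b * Winv (t k) * (W' (t k) * W'inv a) -
                W b * Winv (t (k + 1)) * (W' (t (k + 1)) * W'inv a)‖ := norm_sum_le _ _
          _ ≤ ∑ k ∈ Finset.range m,
              C * ‖W (t (k + 1)) * Winv (t k) - W' (t (k + 1)) * W'inv (t k)‖ := by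
            refine Finset.sum_le_sum fun k hk => ?_
            have hkm := Finset.mem_range.mp hk
            rw [hgs k hkm]
            have hk1 : t (k + 1) ∈ Set.Icc a b := hmem (k + 1) hkm
            have hk0 : t k ∈ Set.Icc a b := hmem k hkm.le
            have hU : ‖W b * Winv (t (k + 1))‖ ≤ M * M :=
              le_trans (norm_mul_le _ _)
                (mul_le_mul (hM b hbmem).1 (hM _ hk1).2 (norm_nonneg _) hM0)
            have hX : ‖W' (t k) * W'inv a‖ ≤ M' * M' :=
              le_trans (norm_mul_le _ _)
                (mul_le_mul (hM' _ hk0).1 (hM' a hamem).2 (norm_nonneg _) hM'0)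
            calc ‖W b * Winv (t (k + 1)) *
                  (W (t (k + 1)) * Winv (t k) - W' (t (k + 1)) * W'inv (t k)) *
                  (W' (t k) * W'inv a)‖
                ≤ ‖W b * Winv (t (k + 1)) *
                    (W (t (k + 1)) * Winv (t k) - W' (t (k + 1)) * W'inv (t k))‖ *
                  ‖W' (t k) * W'inv a‖ := norm_mul_le _ _
              _ ≤ (‖W b * Winv (t (k + 1))‖ *
                    ‖W (t (k + 1)) * Winv (t k) - W' (t (k + 1)) * W'inv (t k)‖) *
                  ‖W' (t k) * W'inv a‖ :=
                mul_le_mul_of_nonneg_right (norm_mul_le _ _) (norm_nonneg _)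
              _ ≤ (M * M * ‖W (t (k + 1)) * Winv (t k) - W' (t (k + 1)) * W'inv (t k)‖) *
                  (M' * M') := by
                refine mul_le_mul (mul_le_mul_of_nonneg_right hU (norm_nonneg _)) hX
                  (norm_nonneg _) ?_
                positivity
              _ = C * ‖W (t (k + 1)) * Winv (t k) - W' (t (k + 1)) * W'inv (t k)‖ := by
                rw [hCdef]; ring
          _ = C * ∑ k ∈ Finset.range m,
              ‖W (t (k + 1)) * Winv (t k) - W' (t (k + 1)) * W'inv (t k)‖ :=
            (Finset.mul_sum _ _ _).symm
          _ ≤ C * (3 * ε) := mul_le_mul_of_nonneg_left hsum.le hC0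
      have hfinal : C * (3 * ε) < η := by
        have : (3 * C + 1) * ε = η := by
          rw [hεdef, mul_div_cancel₀ _ (ne_of_gt hC1)]
        nlinarith [hε]
      exact lt_of_le_of_lt hbound hfinal
    by_contra hne
    exact absurd (key _ (norm_pos_iff.mpr (sub_ne_zero.mpr hne))) (lt_irrefl _)


end
end
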